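/- Let \phi(x_1,x_2,x_3) = \frac{(1-x_3)(1-x_1-x_3)(1-x_2-x_3)(1-x_1-x_2-x_3)}{-\,x_1 x_2 x_3}, a Laurent polynomial in three variables. Then for every k \ge 0, the constant term of \phi^k (the coefficient of x_1^0 x_2^0 x_3^0 in the Laurent expansion of \phi(x)^k) equals \sum_{i=0}^{k} \sum_{j=0}^{k-i} \frac{k!\,(2k)!}{(i!)^2 (j!)^2 (k-i)!\,(k-j)!\,(k-i-j)!}. In particular these constant terms are 1, 6, 114, \ldots for k = 0, 1, 2. -/

import Mathlib

/-!
Write `u = 1 - x₃`. The numerator of `φ` factors as `(u - x₁)(u - x₂)(u - x₁ - x₂) u`, and as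
`φ = -(x₁x₂x₃)⁻¹ · numerator`, the constant term of `φᵏ` is `(-1)ᵏ` times the coefficient of
`(x₁x₂x₃)ᵏ` in the `k`-th power of the numerator. Expand the three powers binomially in `x₁` and
`x₂`: a term contributes to `x₁ᵏx₂ᵏ` exactly when the exponents taken from `(u - x₁)ᵏ` and
`(u - x₂)ᵏ` complement the exponents `j, i` of `x₁, x₂` taken from `(u - x₁ - x₂)ᵏ`. Every such
term carries the same power `u²ᵏ`, whose `x₃ᵏ` coefficient is `(-1)ᵏ C(2k, k)`; the signs cancel,
and `C(2k, k) C(k, j) C(k, i) · C(k, i) C(k - i, j)` is the stated factorial quotient.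
-/

/-- The `i`-th coordinate variable `xᵢ`, as an element of the ring of Laurent polynomials in
three variables (the group algebra of `ℤ³` over `ℂ`). -/
noncomputable def X3 (i : Fin 3) : AddMonoidAlgebra ℂ (Fin 3 → ℤ) :=
  AddMonoidAlgebra.single (Pi.single i 1) 1

/-- The Minkowski Laurent polynomial
`φ = (1-x₃)(1-x₁-x₃)(1-x₂-x₃)(1-x₁-x₂-x₃) / (-x₁x₂x₃)`
of the Landau–Ginzburg model mirror to the Fano threefold `V₁₀`. -/
noncomputable def phiV10 : AddMonoidAlgebra ℂ (Fin 3 → ℤ) :=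
  AddMonoidAlgebra.single (fun _ => (-1 : ℤ)) (-1 : ℂ) *
    ((1 - X3 2) * (1 - X3 0 - X3 2) * (1 - X3 1 - X3 2) *
      (1 - X3 0 - X3 1 - X3 2))

open AddMonoidAlgebra Finset

namespace AddMonoidAlgebra

variable {R G : Type*} [CommSemiring R] [AddCommMonoid G]

theorem single_add_pow (g : G) (r : R) (f : R[G]) (n : ℕ) :
    (single g r + f) ^ n =
      ∑ i ∈ range (n + 1), single (i • g) (r ^ i * n.choose i) * f ^ (n - i) := by
  rw [add_pow]
  refine sum_congr rfl fun i _ => ?_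
  rw [single_pow, natCast_def, mul_right_comm, single_mul_single, add_zero]

end AddMonoidAlgebra

theorem sum_range_ite_natCast_add_eq {M : Type*} [AddCommMonoid M] {a k : ℕ} (h : a ≤ k)
    (f : ℕ → M) :
    ∑ i ∈ range (k + 1), (if (i + a : ℤ) = k then f i else 0) = f (k - a) := by
  have hcond (i : ℕ) : (i + a : ℤ) = k ↔ i = k - a := by omega
  simp only [hcond, sum_ite_eq', mem_range, Nat.lt_succ_iff, Nat.sub_le, if_true]

open Nat in
theorem choose_mul_eq_factorial_div {K : Type*} [Field K] [CharZero K] {k i j : ℕ}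
    (h : i + j ≤ k) :
    ((2 * k).choose k * k.choose (k - j) * k.choose (k - i) * k.choose i * (k - i).choose j : K) =
      k ! * (2 * k)! / (i ! ^ 2 * j ! ^ 2 * (k - i)! * (k - j)! * (k - i - j)!) := by
  rw [Nat.cast_choose K (by omega : k ≤ 2 * k), Nat.cast_choose K (Nat.sub_le k j),
    Nat.cast_choose K (Nat.sub_le k i), Nat.cast_choose K (by omega : i ≤ k),
    Nat.cast_choose K (by omega : j ≤ k - i), Nat.sub_sub_self (by omega : j ≤ k),
    Nat.sub_sub_self (by omega : i ≤ k), two_mul, Nat.add_sub_cancel]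
  field_simp

theorem sub_X3_pow (u : ℂ[Fin 3 → ℤ]) (i : Fin 3) (n : ℕ) :
    (u - X3 i) ^ n =
      ∑ j ∈ range (n + 1),
        single (j • Pi.single i 1) ((-1 : ℂ) ^ j * n.choose j) * u ^ (n - j) := by
  rw [sub_eq_neg_add, X3, ← single_neg, single_add_pow]

theorem one_sub_X3_two_pow (e : ℕ) :
    (1 - X3 2) ^ e =
      ∑ t ∈ range (e + 1), single ![0, 0, (t : ℤ)] ((-1 : ℂ) ^ t * e.choose t) := by
  rw [sub_X3_pow]
  refine sum_congr rfl fun t _ => ?_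
  rw [one_pow, mul_one]
  congr 1
  ext i; fin_cases i <;> simp

noncomputable def uTerm (p q : ℤ) (e : ℕ) (c : ℂ) : ℂ[Fin 3 → ℤ] :=
  single ![p, q, 0] c * (1 - X3 2) ^ e

theorem single_mul_uTerm (p' q' p q : ℤ) (e : ℕ) (c' c : ℂ) :
    single ![p', q', 0] c' * uTerm p q e c = uTerm (p' + p) (q' + q) e (c' * c) := by
  rw [uTerm, ← mul_assoc, single_mul_single, uTerm]
  simp

theorem uTerm_mul_uTerm (p q p' q' : ℤ) (e e' : ℕ) (c c' : ℂ) :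
    uTerm p q e c * uTerm p' q' e' c' = uTerm (p + p') (q + q') (e + e') (c * c') := by
  simp only [uTerm]
  rw [mul_mul_mul_comm, single_mul_single, pow_add]
  simp

theorem coeff_uTerm (p q m n : ℤ) (e k : ℕ) (c : ℂ) :
    (uTerm p q e c).coeff ![m, n, k] =
      if p = m ∧ q = n then c * ((-1) ^ k * e.choose k) else 0 := by
  rw [uTerm, coeff_single_mul_apply, one_sub_X3_two_pow, coeff_sum, sum_apply']
  have hshift : -![p, q, 0] + ![m, n, (k : ℤ)] = ![m - p, n - q, (k : ℤ)] := by
    ext i; fin_cases i <;> simp <;> ring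
  simp only [hshift, coeff_single, Finsupp.single_apply, Matrix.vecCons_inj, Nat.cast_inj]
  by_cases hpq : p = m ∧ q = n
  · obtain ⟨rfl, rfl⟩ := hpq
    simp only [sub_self, and_true, true_and, if_true, sum_ite_eq', mem_range]
    split_ifs with hk
    · rfl
    · simp [Nat.choose_eq_zero_of_lt (by omega : e < k)]
  · rw [if_neg hpq, sum_eq_zero fun t _ => if_neg ?_, mul_zero]
    rintro ⟨hp, hq, -⟩
    exact hpq ⟨by linarith, by linarith⟩

theorem one_sub_X3_two_sub_X3_zero_pow (n : ℕ) :
    (1 - X3 2 - X3 0) ^ n =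
      ∑ i ∈ range (n + 1), uTerm i 0 (n - i) ((-1) ^ i * n.choose i) := by
  rw [sub_X3_pow]
  refine sum_congr rfl fun i _ => ?_
  rw [uTerm]; congr 2; ext j; fin_cases j <;> simp

theorem one_sub_X3_two_sub_X3_one_pow (n : ℕ) :
    (1 - X3 2 - X3 1) ^ n =
      ∑ j ∈ range (n + 1), uTerm 0 j (n - j) ((-1) ^ j * n.choose j) := by
  rw [sub_X3_pow]
  refine sum_congr rfl fun j _ => ?_
  rw [uTerm]; congr 2; ext i; fin_cases i <;> simp

theorem one_sub_X3_two_sub_X3_zero_sub_X3_one_pow (k : ℕ) :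
    (1 - X3 2 - X3 0 - X3 1) ^ k =
      ∑ i ∈ range (k + 1), ∑ j ∈ range (k - i + 1),
        uTerm j i (k - i - j) ((-1) ^ (j + i) * (k.choose i * (k - i).choose j)) := by
  rw [sub_X3_pow]
  refine sum_congr rfl fun i _ => ?_
  rw [one_sub_X3_two_sub_X3_zero_pow, mul_sum]
  refine sum_congr rfl fun j _ => ?_
  have hi : (i • Pi.single 1 1 : Fin 3 → ℤ) = ![0, (i : ℤ), 0] := by
    ext l; fin_cases l <;> simp
  rw [hi, single_mul_uTerm]
  congr 1 <;> ring

noncomputable def numeratorV10 : ℂ[Fin 3 → ℤ] :=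
  (1 - X3 2) * (1 - X3 0 - X3 2) * (1 - X3 1 - X3 2) * (1 - X3 0 - X3 1 - X3 2)

theorem phiV10_eq : phiV10 = single (fun _ => -1) (-1) * numeratorV10 := rfl

theorem coeff_numeratorV10_pow (k : ℕ) :
    (numeratorV10 ^ k).coeff ![k, k, k] =
      (-1) ^ k * ∑ i ∈ range (k + 1), ∑ j ∈ range (k - i + 1),
        ((2 * k).choose k * k.choose (k - j) * k.choose (k - i) * k.choose i *
          (k - i).choose j : ℂ) := by
  have hfac : numeratorV10 =
      (1 - X3 2 - X3 0) * (1 - X3 2 - X3 1) * (1 - X3 2 - X3 0 - X3 1) * (1 - X3 2) := by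
    rw [numeratorV10]; ring
  have hu : (1 - X3 2) ^ k = uTerm 0 0 k 1 := by
    have h0 : (![0, 0, 0] : Fin 3 → ℤ) = 0 := by ext i; fin_cases i <;> rfl
    rw [uTerm, h0, ← one_def, one_mul]
  rw [hfac, mul_pow, mul_pow, mul_pow, one_sub_X3_two_sub_X3_zero_pow,
    one_sub_X3_two_sub_X3_one_pow, one_sub_X3_two_sub_X3_zero_sub_X3_one_pow, hu]
  simp only [sum_mul, mul_sum, uTerm_mul_uTerm, coeff_sum, sum_apply', coeff_uTerm]
  simp only [add_zero, zero_add, mul_one, ite_and]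
  refine sum_congr rfl fun i hi => sum_congr rfl fun j hj => ?_
  have hi : i ≤ k := Nat.lt_succ_iff.1 (mem_range.1 hi)
  have hj : j ≤ k - i := Nat.lt_succ_iff.1 (mem_range.1 hj)
  rw [sum_congr rfl fun _ _ => sum_range_ite_natCast_add_eq (by omega) _,
    sum_range_ite_natCast_add_eq hi]
  have hexp : k - (k - j) + (k - (k - i)) + (k - i - j) + k = 2 * k := by omega
  have hsign : (-1 : ℂ) ^ (k - j) * (-1) ^ (k - i) * (-1) ^ (j + i) = 1 := by
    rw [← pow_add, ← pow_add, show k - j + (k - i) + (j + i) = 2 * k by omega, pow_mul]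
    norm_num
  rw [hexp]
  linear_combination ((-1) ^ k * (2 * k).choose k * k.choose (k - j) * k.choose (k - i) *
    k.choose i * (k - i).choose j : ℂ) * hsign

theorem coeff_phiV10_pow (k : ℕ) :
    (phiV10 ^ k).coeff 0 =
      ∑ i ∈ range (k + 1), ∑ j ∈ range (k - i + 1),
        ((k.factorial : ℂ) * ((2 * k).factorial : ℂ)) /
          (((i.factorial : ℂ)) ^ 2 * ((j.factorial : ℂ)) ^ 2 * ((k - i).factorial : ℂ) *
            ((k - j).factorial : ℂ) * ((k - i - j).factorial : ℂ)) := by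
  have hshift : -(k • fun _ => (-1 : ℤ)) + 0 = ![(k : ℤ), k, k] := by
    ext i; fin_cases i <;> simp
  have hsign : (-1 : ℂ) ^ k * (-1) ^ k = 1 := by rw [← pow_add, ← two_mul, pow_mul]; norm_num
  rw [phiV10_eq, mul_pow, single_pow, coeff_single_mul_apply, hshift, coeff_numeratorV10_pow,
    ← mul_assoc, hsign, one_mul]
  refine sum_congr rfl fun i hi => sum_congr rfl fun j hj => ?_
  exact choose_mul_eq_factorial_div (by simp only [mem_range] at hi hj; omega)

/-- The constant term of `φ^k` equals
`∑_{i=0}^{k} ∑_{j=0}^{k-i} k!(2k)! / (i!² j!² (k-i)! (k-j)! (k-i-j)!)`;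
in particular these constant terms are `1, 6, 114` for `k = 0, 1, 2`. -/
theorem constant_term_phiV10 :
    (∀ k : ℕ, (phiV10 ^ k).coeff 0 =
      ∑ i ∈ Finset.range (k + 1), ∑ j ∈ Finset.range (k - i + 1),
        ((k.factorial : ℂ) * ((2 * k).factorial : ℂ)) /
          (((i.factorial : ℂ)) ^ 2 * ((j.factorial : ℂ)) ^ 2 * ((k - i).factorial : ℂ) *
            ((k - j).factorial : ℂ) * ((k - i - j).factorial : ℂ))) ∧
      (phiV10 ^ 0).coeff 0 = 1 ∧ (phiV10 ^ 1).coeff 0 = 6 ∧ (phiV10 ^ 2).coeff 0 = 114 := by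
  refine ⟨coeff_phiV10_pow, ?_, ?_, ?_⟩ <;> rw [coeff_phiV10_pow] <;>
    norm_num [sum_range_succ, Nat.factorial]
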